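/- Let Υ : 𝒜 → 𝒜 be a unital positive linear map that preserves almost locality with m ∈ 𝓜, and let Υ* be its adjoint with respect to the trace pairing, i.e. tr(S Υ(O)) = tr(Υ*(S) O) for all O, S ∈ 𝒜 (so Υ* is positive and trace-preserving). Then for every density matrix ρ on ℋ, every X ⊆ Γ and every r ∈ ℕ+: |Υ*(ρ) − Υ*( tr_{((X)_r)^c}(ρ) ⊗ ι_{((X)_r)^c} )|_X ≤ |X| m(r), where for Y ⊆ Γ, ι_Y = 1_Y / dim ℋ_Y. -/

import Mathlib

open scoped BigOperators ComplexOrder Matrix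

noncomputable section

namespace Stability

/-- The class `𝓜` of quasi-exponentially decaying functions: non-increasing, nonnegative,
and bounded by `C_α e^{-c_α r^α}` for every `0 < α < 1` (for positive arguments). -/
def InM (m : ℕ → ℝ) : Prop :=
  (∀ r, 0 ≤ m r) ∧ (∀ r s : ℕ, r ≤ s → m s ≤ m r) ∧
    ∀ α : ℝ, 0 < α → α < 1 →
      ∃ C c : ℝ, 0 < C ∧ 0 < c ∧ ∀ r : ℕ, 1 ≤ r → m r ≤ C * Real.exp (-(c * (r : ℝ) ^ α))

variable {Γ : Type} [Fintype Γ] [DecidableEq Γ]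

/-- The ball of radius `r` around `x` for the graph distance. -/
def ball (G : SimpleGraph Γ) (x : Γ) (r : ℕ) : Finset Γ :=
  Finset.univ.filter fun y => G.dist x y ≤ r

open Classical in
/-- The ball of a real radius `t` around `x` for the graph distance. -/
def ballR (G : SimpleGraph Γ) (x : Γ) (t : ℝ) : Finset Γ :=
  Finset.univ.filter fun y => (G.dist x y : ℝ) ≤ t

/-- `Γ` has dimension `d` with constant `CΓ`:  `|B_r(x)| ≤ 1 + CΓ r^d`. -/
def HasDim (G : SimpleGraph Γ) (d : ℕ) (CΓ : ℝ) : Prop :=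
  ∀ (x : Γ) (r : ℕ), ((ball G x r).card : ℝ) ≤ 1 + CΓ * (r : ℝ) ^ d

/-- Distance between two sets of vertices (junk value `0` if one of them is empty). -/
def setDist (G : SimpleGraph Γ) (X Y : Finset Γ) : ℕ :=
  sInf {n : ℕ | ∃ x ∈ X, ∃ y ∈ Y, G.dist x y = n}

/-- Distance from a point to a set. -/
def ptDist (G : SimpleGraph Γ) (x : Γ) (Y : Finset Γ) : ℕ := setDist G {x} Y

/-- Diameter of a finite set of vertices. -/
def diam (G : SimpleGraph Γ) (X : Finset Γ) : ℕ :=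
  sSup {n : ℕ | ∃ x ∈ X, ∃ y ∈ X, G.dist x y = n}

/-- The fattening `(Z)_r` of a set `Z`. -/
def fatten (G : SimpleGraph Γ) (Z : Finset Γ) (r : ℕ) : Finset Γ :=
  Finset.univ.filter fun x => ∃ z ∈ Z, G.dist x z ≤ r

/-- The boundary `∂Z = (Z)_1 ∩ (Z^c)_1` of a set `Z`. -/
def boundary (G : SimpleGraph Γ) (Z : Finset Γ) : Finset Γ :=
  fatten G Z 1 ∩ fatten G Zᶜ 1

/-- The rank-one operator `|ψ⟩⟨ψ|` of a vector. -/
def rankOne {ι : Type} (ψ : ι → ℂ) : Matrix ι ι ℂ := fun a b => ψ a * star (ψ b)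

/-- `ψ` is a unit vector for the `ℓ²` norm. -/
def UnitVec {ι : Type} [Fintype ι] (ψ : ι → ℂ) : Prop := ∑ a, Complex.normSq (ψ a) = 1

/-- Operator norm of a matrix, acting on the Euclidean (ℓ²) space. -/
def opNorm {ι : Type} [Fintype ι] [DecidableEq ι] (A : Matrix ι ι ℂ) : ℝ :=
  ‖Matrix.toEuclideanCLM (𝕜 := ℂ) A‖

/-- Trace norm `‖A‖₁ = tr √(AᴴA)` of a matrix. -/
def traceNorm {ι : Type} [Fintype ι] [DecidableEq ι] (A : Matrix ι ι ℂ) : ℝ :=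
  ((Matrix.posSemidef_conjTranspose_mul_self A).1.eigenvectorUnitary.1 *
    Matrix.diagonal (fun i => ((Real.sqrt ((Matrix.posSemidef_conjTranspose_mul_self A).1.eigenvalues i) : ℝ) : ℂ)) *
    (star (Matrix.posSemidef_conjTranspose_mul_self A).1.eigenvectorUnitary : Matrix ι ι ℂ)).trace.re

/-- `γ(A) = min (spec(A) \ {0})` (junk value if the set has no infimum in `ℝ`). -/
def mingap {ι : Type} [Fintype ι] [DecidableEq ι] (A : Matrix ι ι ℂ) : ℝ :=
  sInf {t : ℝ | t ≠ 0 ∧ (t : ℂ) ∈ spectrum ℂ A}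

/-- `P` is the orthogonal projector onto the kernel of `A`. -/
def IsKerProj {ι : Type} [Fintype ι] [DecidableEq ι] (A P : Matrix ι ι ℂ) : Prop :=
  P.IsHermitian ∧ P * P = P ∧ A * P = 0 ∧ ∀ v : ι → ℂ, A.mulVec v = 0 → P.mulVec v = v

section ops

variable (κ : Γ → Type) [∀ x, Fintype (κ x)] [∀ x, DecidableEq (κ x)]

/-- Configurations of the whole system; `ℋ = ℂ^(Cfg κ)`. -/
abbrev Cfg : Type := ∀ x : Γ, κ x

/-- Configurations of the subsystem in the region `X`. -/
abbrev SubCfg (X : Finset Γ) : Type := ∀ x : X, κ x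

/-- Observables on the whole system: `𝒜 = B(ℋ)`. -/
abbrev Op : Type := Matrix (Cfg κ) (Cfg κ) ℂ

/-- Embedding `𝒜_X → 𝒜`, `O ↦ O ⊗ 1_{X^c}`. -/
def embed (X : Finset Γ) (O : Matrix (SubCfg κ X) (SubCfg κ X) ℂ) : Op κ := fun a b =>
  if ∀ x, x ∉ X → a x = b x then O (fun x => a x.1) (fun x => b x.1) else 0

/-- `A` is supported in the region `X`. -/
def SupportedIn (X : Finset Γ) (A : Op κ) : Prop := ∃ O, A = embed κ X O

/-- Glue a configuration on `X` and one on `Xᶜ` to a global configuration. -/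
def glue (X : Finset Γ) (a : SubCfg κ X) (c : SubCfg κ Xᶜ) : Cfg κ := fun x =>
  if h : x ∈ X then a ⟨x, h⟩ else c ⟨x, Finset.mem_compl.mpr h⟩

/-- Partial trace `tr_{X^c} : 𝒜 → 𝒜_X`. -/
def ptrace (X : Finset Γ) (A : Op κ) : Matrix (SubCfg κ X) (SubCfg κ X) ℂ := fun a b =>
  ∑ c : SubCfg κ Xᶜ, A (glue κ X a c) (glue κ X b c)

/-- The local trace norm `|A|_X = ‖tr_{X^c} A‖₁`. -/
def locNorm (X : Finset Γ) (A : Op κ) : ℝ := traceNorm (ptrace κ X A)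

/-- Expectation value `⟨A⟩_ρ = tr(ρ A)` (real part). -/
def expVal (ρ A : Op κ) : ℝ := ((ρ * A).trace).re

/-- `ρ` is a density matrix. -/
def IsDensity (ρ : Op κ) : Prop := ρ.PosSemidef ∧ ρ.trace = 1

/-- An interaction: a collection of self-adjoint operators `q_X` supported in `X`. -/
def IsInteraction (q : Finset Γ → Op κ) : Prop :=
  ∀ X, (q X).IsHermitian ∧ SupportedIn κ X (q X)

/-- `‖q‖_m ≤ C` where `‖q‖_m = sup_x Σ_{X ∋ x} ‖q_X‖ / m(1 + diam X)`. -/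
def intNormLE (G : SimpleGraph Γ) (m : ℕ → ℝ) (q : Finset Γ → Op κ) (C : ℝ) : Prop :=
  ∀ x : Γ, ∑ X ∈ Finset.univ.filter (fun X : Finset Γ => x ∈ X),
      opNorm (q X) / m (1 + diam G X) ≤ C

/-- `|||q|||_F ≤ C` where `|||q|||_F = sup_{x,y} Σ_{S ⊇ {x,y}} ‖q_S‖ / F(dist(x,y))`. -/
def fNormLE (G : SimpleGraph Γ) (F : ℕ → ℝ) (q : Finset Γ → Op κ) (C : ℝ) : Prop :=
  ∀ x y : Γ, ∑ S ∈ Finset.univ.filter (fun S : Finset Γ => x ∈ S ∧ y ∈ S),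
      opNorm (q S) / F (G.dist x y) ≤ C

/-- The global Hamiltonian `H = Σ_X h_X`. -/
def ham (h : Finset Γ → Op κ) : Op κ := ∑ X : Finset Γ, h X

/-- The OBC restriction `H_Z = Σ_{X ⊆ Z} h_X`. -/
def hamOn (h : Finset Γ → Op κ) (Z : Finset Γ) : Op κ :=
  ∑ X ∈ Finset.univ.filter (fun X : Finset Γ => X ⊆ Z), h X

/-- The conditional expectation `𝔼_{Y^c} : 𝒜 → 𝒜_Y`, `O ↦ (tr_{Y^c} O / dim ℋ_{Y^c}) ⊗ 1_{Y^c}`.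
Applied to a density matrix it yields `tr_{Y^c}(ρ) ⊗ ι_{Y^c}` with `ι` the normalized trace. -/
def condExp (Y : Finset Γ) (A : Op κ) : Op κ := fun a b =>
  if ∀ x, x ∉ Y → a x = b x then
    ptrace κ Y A (fun x => a x.1) (fun x => b x.1) / (Fintype.card (SubCfg κ Yᶜ) : ℂ)
  else 0

/-- Tensor product of an operator on `Z` with an operator on `Z^c`. -/
def cutTensor (Z : Finset Γ) (A : Matrix (SubCfg κ Z) (SubCfg κ Z) ℂ)
    (B : Matrix (SubCfg κ Zᶜ) (SubCfg κ Zᶜ) ℂ) : Op κ := fun a b =>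
  A (fun x => a x.1) (fun x => b x.1) * B (fun x => a x.1) (fun x => b x.1)

/-- `tr_{Z^c}(μ) ⊗ tr_Z(ρ)`. -/
def splitState (Z : Finset Γ) (μ ρ : Op κ) : Op κ :=
  cutTensor κ Z (ptrace κ Z μ) (ptrace κ Zᶜ ρ)

/-- `Φ` is a ground state of the (self-adjoint) matrix `A`: a unit eigenvector whose
eigenvalue is the minimum of the spectrum. -/
def IsGroundState (A : Op κ) (ψ : Cfg κ → ℂ) : Prop :=
  UnitVec ψ ∧ ∃ lam : ℝ, A.mulVec ψ = (lam : ℂ) • ψ ∧ ∀ z ∈ spectrum ℂ A, lam ≤ z.re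

end ops

/-- The Choi matrix of a map on matrices. -/
def choi {ι : Type} [Fintype ι] [DecidableEq ι] (Φ : Matrix ι ι ℂ → Matrix ι ι ℂ) :
    Matrix (ι × ι) (ι × ι) ℂ := fun p q => Φ (Matrix.single p.1 q.1 1) p.2 q.2

/-- `Φ` is a trace-preserving completely positive map (complete positivity via Choi's theorem). -/
def IsCPTP {ι : Type} [Fintype ι] [DecidableEq ι] (Φ : Matrix ι ι ℂ → Matrix ι ι ℂ) : Prop :=
  IsLinearMap ℂ Φ ∧ (choi Φ).PosSemidef ∧ ∀ A, (Φ A).trace = A.trace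

section stitching

variable (κ : Γ → Type) [∀ x, Fintype (κ x)] [∀ x, DecidableEq (κ x)]

/-- Definition of a family of stitching maps `Σ_Z` with function `m`, for the state `μ`. -/
def IsStitching (G : SimpleGraph Γ) (μ : Op κ) (S : Finset Γ → Op κ → Op κ) (m : ℕ → ℝ) :
    Prop :=
  (∀ Z, IsCPTP (S Z)) ∧
    (∀ Z X : Finset Γ, ∀ ρ : Op κ, IsDensity κ ρ →
      locNorm κ X (S Z ρ - splitState κ Z μ ρ) ≤
        (X.card : ℝ) * m (setDist G (boundary G Z) X)) ∧
    (∀ Z X : Finset Γ, ∀ r : ℕ, 1 ≤ r → ∀ ρ ω : Op κ, IsDensity κ ρ → IsDensity κ ω →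
      locNorm κ X (S Z ρ - S Z ω) ≤
        locNorm κ (fatten G X r) (ρ - ω) + (X.card : ℝ) * m r) ∧
    (∀ Z, S Z μ = μ)

/-- A map on observables preserves almost locality with function `m`. -/
def PreservesAlmostLocality (G : SimpleGraph Γ) (T : Op κ → Op κ) (m : ℕ → ℝ) : Prop :=
  ∀ (X : Finset Γ) (r : ℕ), 1 ≤ r → ∀ O : Op κ, SupportedIn κ X O →
    opNorm (T O - condExp κ (fatten G X r) (T O)) ≤ opNorm O * (X.card : ℝ) * m r

end stitching

section aux

variable (κ κ' : Γ → Type)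
variable [∀ x, Fintype (κ x)] [∀ x, DecidableEq (κ x)]
variable [∀ x, Fintype (κ' x)] [∀ x, DecidableEq (κ' x)]

/-- Sites of the enlarged system `𝓗̃ = ℋ ⊗ ℋ'`. -/
abbrev AuxSites : Γ → Type := fun x => κ x × κ' x

/-- Tensor product of vectors `ψ ⊗ ψ'` in `𝓗̃`. -/
def tensorVec (ψ : Cfg κ → ℂ) (ψ' : Cfg κ' → ℂ) : Cfg (AuxSites κ κ') → ℂ := fun a =>
  ψ (fun x => (a x).1) * ψ' (fun x => (a x).2)

/-- Tensor product of operators `ρ ⊗ ρ'` on `𝓗̃`. -/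
def tensorOp (ρ : Op κ) (ρ' : Op κ') : Op (AuxSites κ κ') := fun a b =>
  ρ (fun x => (a x).1) (fun x => (b x).1) * ρ' (fun x => (a x).2) (fun x => (b x).2)

/-- Partial trace over the auxiliary space, `tr_{ℋ'} : B(𝓗̃) → B(ℋ)`. -/
def ptraceAux (A : Op (AuxSites κ κ')) : Op κ := fun a b =>
  ∑ c : Cfg κ', A (fun x => (a x, c x)) (fun x => (b x, c x))

/-- A product vector `⊗_x π_x`. -/
def IsProductVec (ψ : Cfg κ → ℂ) : Prop :=
  ∃ p : ∀ x : Γ, κ x → ℂ, ∀ a, ψ a = ∏ x : Γ, p x (a x)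

end aux

/-- `U` solves the Schrödinger-type integral equation
`U(s) = 1 + i ∫₀ˢ H(u) U(u) du` on `[0,1]` (entrywise). -/
def SolvesEvolution {ι : Type} [Fintype ι] [DecidableEq ι]
    (H : ℝ → Matrix ι ι ℂ) (U : ℝ → Matrix ι ι ℂ) : Prop :=
  ∀ s ∈ Set.Icc (0 : ℝ) 1, ∀ a b,
    U s a b = (1 : Matrix ι ι ℂ) a b + Complex.I * ∫ u in (0 : ℝ)..s, (H u * U u) a b

/-- The truncated interaction `q̂` associated to the cut `Z | Z^c`. -/
def qhat {ι : Type} (Z : Finset Γ) (q : ℝ → Finset Γ → Matrix ι ι ℂ) :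
    ℝ → Finset Γ → Matrix ι ι ℂ := fun s X => if X ⊆ Z ∨ X ⊆ Zᶜ then q s X else 0

section inv

variable (κ κ' : Γ → Type)
variable [∀ x, Fintype (κ x)] [∀ x, DecidableEq (κ x)]
variable [∀ x, Fintype (κ' x)] [∀ x, DecidableEq (κ' x)]

/-- Assumption (Inv): the data `(q, U, Ω')` witnesses invertibility of the state `Ω = ω`:
`q(s)` is a measurable family of interactions on `𝓗̃` with `sup_s ‖q(s)‖_{m_I} ≤ C_I`,
`U` solves the corresponding evolution equation, and `Ω ⊗ Ω' = U(1) Π` with `Π` a product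
unit vector. -/
def InvData (G : SimpleGraph Γ) (mI : ℕ → ℝ) (CI : ℝ)
    (q : ℝ → Finset Γ → Op (AuxSites κ κ')) (U : ℝ → Op (AuxSites κ κ'))
    (ω : Cfg κ → ℂ) (ω' : Cfg κ' → ℂ) : Prop :=
  (∀ s ∈ Set.Icc (0 : ℝ) 1, IsInteraction (AuxSites κ κ') (q s)) ∧
    (∀ (X : Finset Γ) a b, Measurable fun s => q s X a b) ∧
    (∀ s ∈ Set.Icc (0 : ℝ) 1, intNormLE (AuxSites κ κ') G mI (q s) CI) ∧
    SolvesEvolution (fun s => ∑ X : Finset Γ, q s X) U ∧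
    UnitVec ω' ∧
    ∃ Pv : Cfg (AuxSites κ κ') → ℂ, IsProductVec (AuxSites κ κ') Pv ∧ UnitVec Pv ∧
      tensorVec κ κ' ω ω' = (U 1).mulVec Pv

/-- The stitching map `Σ_Z` built from the unitary `V = V_Z`:
`Σ_Z(ρ) = tr_{ℋ'}[V^*(tr_{Z^c}(V(μ⊗μ')V^*) ⊗ tr_Z(V(ρ⊗μ')V^*))V]`. -/
def stitchMap (Z : Finset Γ) (V : Op (AuxSites κ κ')) (μ : Op κ) (μ' : Op κ')
    (ρ : Op κ) : Op κ :=
  ptraceAux κ κ' (Vᴴ *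
    cutTensor (AuxSites κ κ') Z
      (ptrace (AuxSites κ κ') Z (V * tensorOp κ κ' μ μ' * Vᴴ))
      (ptrace (AuxSites κ κ') Zᶜ (V * tensorOp κ κ' ρ μ' * Vᴴ)) * V)

end inv

/-- An F-function on the graph `Γ` with constants `CF`, `CF'`. -/
def IsFFunction (G : SimpleGraph Γ) (F : ℕ → ℝ) (CF CF' : ℝ) : Prop :=
  (∀ x y : Γ, ∑ z : Γ, F (G.dist x z) * F (G.dist z y) ≤ CF * F (G.dist x y)) ∧
    ∀ x : Γ, ∑ y : Γ, F (G.dist x y) ≤ CF'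

/-- The logarithmic-superadditive envelope `S(f)` of `f`: the supremum of `∏ f(r_i)`
over all compositions `r = r_1 + ⋯ + r_ℓ` with `r_i ∈ ℕ+`. -/
def Senv (f : ℕ → ℝ) (r : ℕ) : ℝ :=
  sSup {t : ℝ | ∃ L : List ℕ, L ≠ [] ∧ (∀ i ∈ L, 1 ≤ i) ∧ L.sum = r ∧ t = (L.map f).prod}

end Stability


namespace Stability

set_option linter.unusedSectionVars false

section MatrixHelpers
variable {ι : Type} [Fintype ι] [DecidableEq ι]

lemma trace_mul_std (M : Matrix ι ι ℂ) (a b : ι) :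
    (M * Matrix.single b a 1).trace = M a b := by
  simp only [Matrix.trace, Matrix.diag, Matrix.mul_apply, Matrix.single,
    Matrix.of_apply, ite_and, mul_ite, mul_one, mul_zero]
  simp [Finset.sum_ite_eq]

lemma psd_conj_diag (U : Matrix ι ι ℂ) (f : ι → ℝ) (hf : ∀ i, 0 ≤ f i) :
    (U * Matrix.diagonal (fun i => (f i : ℂ)) * Uᴴ).PosSemidef := by
  have h := Matrix.posSemidef_conjTranspose_mul_self
    (Matrix.diagonal (fun i => (Real.sqrt (f i) : ℂ)) * Uᴴ)
  have e : (Matrix.diagonal (fun i => (Real.sqrt (f i) : ℂ)) * Uᴴ)ᴴ *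
      (Matrix.diagonal (fun i => (Real.sqrt (f i) : ℂ)) * Uᴴ) =
      U * Matrix.diagonal (fun i => (f i : ℂ)) * Uᴴ := by
    rw [Matrix.conjTranspose_mul, Matrix.conjTranspose_conjTranspose,
      Matrix.diagonal_conjTranspose]
    have : star (fun i => (Real.sqrt (f i) : ℂ)) = fun i => (Real.sqrt (f i) : ℂ) := by
      funext i; simp
    rw [this, Matrix.mul_assoc, ← Matrix.mul_assoc (Matrix.diagonal _),
      Matrix.diagonal_mul_diagonal]
    have : Matrix.diagonal (fun i => (Real.sqrt (f i) : ℂ) * (Real.sqrt (f i) : ℂ)) =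
        Matrix.diagonal (fun i => (f i : ℂ)) := by
      ext i j
      by_cases hij : i = j
      · subst hij; simp [← Complex.ofReal_mul, Real.mul_self_sqrt (hf i)]
      · simp [Matrix.diagonal_apply_ne _ hij]
    rw [this, Matrix.mul_assoc]
  rwa [e] at h

lemma herm_diff_psd {H : Matrix ι ι ℂ} (hH : H.IsHermitian) :
    ∃ P Q : Matrix ι ι ℂ, P.PosSemidef ∧ Q.PosSemidef ∧ H = P - Q := by
  set U : Matrix ι ι ℂ := (hH.eigenvectorUnitary : Matrix ι ι ℂ)
  refine ⟨U * Matrix.diagonal (fun i => ((max (hH.eigenvalues i) 0 : ℝ) : ℂ)) * Uᴴ,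
    U * Matrix.diagonal (fun i => ((max (-hH.eigenvalues i) 0 : ℝ) : ℂ)) * Uᴴ,
    psd_conj_diag U _ (fun i => le_max_right _ _),
    psd_conj_diag U _ (fun i => le_max_right _ _), ?_⟩
  rw [← Matrix.sub_mul, ← Matrix.mul_sub, Matrix.diagonal_sub]
  have : Matrix.diagonal (fun i => ((max (hH.eigenvalues i) 0 : ℝ) : ℂ) -
      ((max (-hH.eigenvalues i) 0 : ℝ) : ℂ)) =
      Matrix.diagonal (fun i => (hH.eigenvalues i : ℂ)) := by
    ext i j
    by_cases hij : i = j
    · subst hij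
      simp only [Matrix.diagonal_apply_eq, ← Complex.ofReal_sub]
      congr 1
      rcases le_or_gt 0 (hH.eigenvalues i) with h | h
      · rw [max_eq_left h, max_eq_right (by linarith), sub_zero]
      · rw [max_eq_right h.le, max_eq_left (by linarith), zero_sub, neg_neg]
    · simp [Matrix.diagonal_apply_ne _ hij]
  rw [this]
  have h2 := hH.spectral_theorem
  rw [Unitary.conjStarAlgAut_apply, Matrix.star_eq_conjTranspose] at h2
  exact h2

lemma diagonal_ext {f g : ι → ℂ} (h : ∀ i, f i = g i) :
    Matrix.diagonal f = Matrix.diagonal g := by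
  exact congrArg Matrix.diagonal (funext h)

lemma sandwich_mul {U : Matrix ι ι ℂ} (hUU : Uᴴ * U = 1) (v w : ι → ℂ) :
    (U * Matrix.diagonal v * Uᴴ) * (U * Matrix.diagonal w * Uᴴ) =
      U * Matrix.diagonal (fun i => v i * w i) * Uᴴ := by
  simp only [Matrix.mul_assoc]
  rw [← Matrix.mul_assoc Uᴴ U, hUU, Matrix.one_mul,
    ← Matrix.mul_assoc (Matrix.diagonal v) (Matrix.diagonal w), Matrix.diagonal_mul_diagonal]

lemma sandwich_conjT (U : Matrix ι ι ℂ) (v : ι → ℂ) :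
    (U * Matrix.diagonal v * Uᴴ)ᴴ = U * Matrix.diagonal (star v) * Uᴴ := by
  simp [Matrix.conjTranspose_mul, Matrix.diagonal_conjTranspose, Matrix.mul_assoc]

lemma sandwich_trace {U : Matrix ι ι ℂ} (hUU : Uᴴ * U = 1) (v : ι → ℂ) :
    (U * Matrix.diagonal v * Uᴴ).trace = ∑ i, v i := by
  rw [Matrix.trace_mul_comm, ← Matrix.mul_assoc, hUU, Matrix.one_mul, Matrix.trace_diagonal]

lemma exists_dual_matrix (B : Matrix ι ι ℂ) (hB : B.IsHermitian) :
    ∃ O : Matrix ι ι ℂ, Oᴴ * O = 1 ∧ ((B * O).trace).re = traceNorm B := by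
  set U : Matrix ι ι ℂ := (hB.eigenvectorUnitary : Matrix ι ι ℂ) with hU
  have hUU : Uᴴ * U = 1 := by
    have := Matrix.mem_unitaryGroup_iff'.mp hB.eigenvectorUnitary.2
    rwa [Matrix.star_eq_conjTranspose] at this
  have hUU' : U * Uᴴ = 1 := by
    have := Matrix.mem_unitaryGroup_iff.mp hB.eigenvectorUnitary.2
    rwa [Matrix.star_eq_conjTranspose] at this
  set lam := hB.eigenvalues with hlam
  set s : ι → ℂ := fun i => if lam i < 0 then (-1 : ℂ) else 1 with hs
  have hspec : B = U * Matrix.diagonal (fun i => (lam i : ℂ)) * Uᴴ := by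
    have h2 := hB.spectral_theorem
    rw [Unitary.conjStarAlgAut_apply, Matrix.star_eq_conjTranspose] at h2
    exact h2
  refine ⟨U * Matrix.diagonal s * Uᴴ, ?_, ?_⟩
  · rw [sandwich_conjT, sandwich_mul hUU]
    have hss : star s = s := by
      funext i; rw [hs]; by_cases h : lam i < 0 <;> simp [h, Pi.star_apply]
    rw [hss]
    have hpt : ∀ i, s i * s i = (fun _ => (1:ℂ)) i := fun i => by
      rw [hs]; by_cases h : lam i < 0 <;> simp [h]
    rw [diagonal_ext hpt, Matrix.diagonal_one, Matrix.mul_one, hUU']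
  · have e1 : B * (U * Matrix.diagonal s * Uᴴ) =
        U * Matrix.diagonal (fun i => ((|lam i| : ℝ) : ℂ)) * Uᴴ := by
      rw [hspec, sandwich_mul hUU]
      have hpt : ∀ i, (lam i : ℂ) * s i = (fun i => ((|lam i| : ℝ) : ℂ)) i := fun i => by
        simp only [hs]
        rcases lt_or_ge (lam i) 0 with h | h
        · simp only [if_pos h, abs_of_neg h]; push_cast; ring
        · simp only [if_neg (not_lt.mpr h), abs_of_nonneg h, mul_one]
      rw [diagonal_ext hpt]
    have hpsd : (U * Matrix.diagonal (fun i => ((|lam i| : ℝ) : ℂ)) * Uᴴ).PosSemidef :=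
      psd_conj_diag U _ (fun i => abs_nonneg _)
    have hsq : (U * Matrix.diagonal (fun i => ((|lam i| : ℝ) : ℂ)) * Uᴴ) ^ 2 = Bᴴ * B := by
      rw [pow_two, sandwich_mul hUU, hB.eq, hspec, sandwich_mul hUU]
      have hpt : ∀ i, ((|lam i| : ℝ) : ℂ) * ((|lam i| : ℝ) : ℂ) =
          (fun i => (lam i : ℂ) * (lam i : ℂ)) i := fun i => by
        rw [← Complex.ofReal_mul, abs_mul_abs_self, Complex.ofReal_mul]
      rw [diagonal_ext hpt]
    have hB2 := Matrix.posSemidef_conjTranspose_mul_self B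
    have hsqrt : U * Matrix.diagonal (fun i => ((|lam i| : ℝ) : ℂ)) * Uᴴ =
        (Matrix.posSemidef_conjTranspose_mul_self B).1.eigenvectorUnitary.1 *
        Matrix.diagonal (fun i => ((Real.sqrt ((Matrix.posSemidef_conjTranspose_mul_self B).1.eigenvalues i) : ℝ) : ℂ)) *
        (star (Matrix.posSemidef_conjTranspose_mul_self B).1.eigenvectorUnitary : Matrix ι ι ℂ) := by
      open MatrixOrder in
      have h1 : CFC.sqrt (Bᴴ * B) = U * Matrix.diagonal (fun i => ((|lam i| : ℝ) : ℂ)) * Uᴴ :=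
        CFC.sqrt_unique ((pow_two _).symm.trans hsq) hpsd.nonneg
      have hUU2 : ((hB2.1.eigenvectorUnitary : Matrix ι ι ℂ))ᴴ * (hB2.1.eigenvectorUnitary : Matrix ι ι ℂ) = 1 := by
        have := Matrix.mem_unitaryGroup_iff'.mp hB2.1.eigenvectorUnitary.2
        rwa [Matrix.star_eq_conjTranspose] at this
      have hP2 := psd_conj_diag (hB2.1.eigenvectorUnitary : Matrix ι ι ℂ)
        (fun i => Real.sqrt (hB2.1.eigenvalues i)) (fun i => Real.sqrt_nonneg _)
      open MatrixOrder in
      have h2 : CFC.sqrt (Bᴴ * B) = (hB2.1.eigenvectorUnitary : Matrix ι ι ℂ) *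
          Matrix.diagonal (fun i => ((Real.sqrt (hB2.1.eigenvalues i) : ℝ) : ℂ)) *
          (hB2.1.eigenvectorUnitary : Matrix ι ι ℂ)ᴴ := by
        refine CFC.sqrt_unique ?_ hP2.nonneg
        rw [sandwich_mul hUU2]
        have hs2 := hB2.1.spectral_theorem
        rw [Unitary.conjStarAlgAut_apply, Matrix.star_eq_conjTranspose] at hs2
        have hpt : ∀ i, ((Real.sqrt (hB2.1.eigenvalues i) : ℝ) : ℂ) *
            ((Real.sqrt (hB2.1.eigenvalues i) : ℝ) : ℂ) = (RCLike.ofReal ∘ hB2.1.eigenvalues) i :=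
          fun i => by
            rw [← Complex.ofReal_mul, Real.mul_self_sqrt (hB2.eigenvalues_nonneg i)]; rfl
        rw [diagonal_ext hpt]
        exact hs2.symm
      rw [← h1, h2]
      rfl
    rw [e1, traceNorm, ← hsqrt, sandwich_trace hUU]
lemma opNorm_le_one_of_isometry (M : Matrix ι ι ℂ) (h : Mᴴ * M = 1) : opNorm M ≤ 1 := by
  rw [opNorm]
  refine ContinuousLinearMap.opNorm_le_bound _ zero_le_one fun v => ?_
  rw [one_mul]
  set Φ := Matrix.toEuclideanCLM (𝕜 := ℂ) M with hΦ
  have h2 : star Φ * Φ = 1 := by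
    rw [hΦ, ← map_star, ← map_mul, Matrix.star_eq_conjTranspose, h, map_one]
  have h3 : ‖Φ v‖ ^ 2 = ‖v‖ ^ 2 := by
    rw [← inner_self_eq_norm_sq (𝕜 := ℂ), ← inner_self_eq_norm_sq (𝕜 := ℂ) (x := v)]
    have h4 : (inner ℂ v ((star Φ * Φ) v) : ℂ) = inner ℂ (Φ v) (Φ v) := by
      rw [ContinuousLinearMap.star_eq_adjoint, ContinuousLinearMap.mul_apply]
      exact ContinuousLinearMap.adjoint_inner_right _ _ _
    rw [← h4, h2, ContinuousLinearMap.one_apply]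
  exact le_of_eq (by rw [← Real.sqrt_sq (norm_nonneg (Φ v)), h3, Real.sqrt_sq (norm_nonneg v)])

lemma trace_mul_re_le (ρ C : Matrix ι ι ℂ) (hρ : ρ.PosSemidef) (htr : ρ.trace = 1) :
    ((ρ * C).trace).re ≤ opNorm C := by
  obtain ⟨L, hL⟩ : ∃ L : Matrix ι ι ℂ, ρ = Lᴴ * L := by
    open MatrixOrder in
    exact ⟨CFC.sqrt ρ, by
      rw [(Matrix.nonneg_iff_posSemidef.mp (CFC.sqrt_nonneg ρ)).1.eq,
        CFC.sqrt_mul_sqrt_self ρ hρ.nonneg]⟩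
  set Φ := Matrix.toEuclideanCLM (𝕜 := ℂ) C with hΦ
  set w : ι → EuclideanSpace ℂ ι := fun i => (WithLp.equiv 2 (ι → ℂ)).symm (star (L i)) with hw
  have key : ∀ i, (L * C * Lᴴ) i i = inner ℂ (w i) (Φ (w i)) := by
    intro i
    rw [hΦ, hw]
    rw [show Matrix.toEuclideanCLM (𝕜 := ℂ) C ((WithLp.equiv 2 (ι → ℂ)).symm (star (L i))) =
      (WithLp.equiv 2 (ι → ℂ)).symm (Matrix.toLin' C (star (L i))) from rfl]
    rw [EuclideanSpace.inner_eq_star_dotProduct]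
    simp only [WithLp.equiv_symm_apply, WithLp.ofLp_toLp]
    rw [Matrix.toLin'_apply]
    simp only [Matrix.mul_apply, Matrix.conjTranspose_apply, dotProduct,
      Matrix.mulVec, dotProduct, Pi.star_apply, star_star, WithLp.equiv_symm_apply,
      WithLp.ofLp_toLp]
    show ∑ j, (∑ k, L i k * C k j) * star (L i j) = ∑ x, (∑ y, C x y * star (L i y)) * L i x
    simp only [Finset.sum_mul]
    rw [Finset.sum_comm]
    exact Finset.sum_congr rfl fun j _ => Finset.sum_congr rfl fun k _ => by ring
  have htrace : (ρ * C).trace = (L * C * Lᴴ).trace := by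
    rw [hL]
    exact (Matrix.trace_mul_cycle L C Lᴴ).symm
  have hbound : ∀ i, ‖(inner ℂ (w i) (Φ (w i)) : ℂ)‖ ≤ opNorm C * ‖w i‖ ^ 2 := by
    intro i
    calc ‖(inner ℂ (w i) (Φ (w i)) : ℂ)‖ ≤ ‖w i‖ * ‖Φ (w i)‖ := norm_inner_le_norm _ _
      _ ≤ ‖w i‖ * (opNorm C * ‖w i‖) := by
          gcongr
          exact Φ.le_opNorm _
      _ = opNorm C * ‖w i‖ ^ 2 := by ring
  have hsum : ∑ i, ‖w i‖ ^ 2 = 1 := by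
    have h1 : ∀ i, ‖w i‖ ^ 2 = ∑ j, ‖L i j‖ ^ 2 := by
      intro i
      rw [hw]
      rw [EuclideanSpace.norm_eq, Real.sq_sqrt (by positivity)]
      exact Finset.sum_congr rfl fun j _ => by
        simp [WithLp.equiv_symm_apply]
    have h2 : (ρ.trace).re = ∑ i, ∑ j, ‖L i j‖ ^ 2 := by
      rw [hL]
      simp only [Matrix.trace, Matrix.diag, Matrix.mul_apply, Matrix.conjTranspose_apply]
      rw [Complex.re_sum, Finset.sum_comm]
      refine Finset.sum_congr rfl fun i _ => ?_
      rw [Complex.re_sum]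
      refine Finset.sum_congr rfl fun j _ => ?_
      simp only [RCLike.star_def]
      rw [mul_comm, Complex.mul_conj, Complex.ofReal_re, Complex.normSq_eq_norm_sq]
    simp_rw [h1]
    rw [← h2, htr, Complex.one_re]
  calc ((ρ * C).trace).re ≤ ‖(ρ * C).trace‖ := Complex.re_le_norm _
    _ = ‖∑ i, (L * C * Lᴴ) i i‖ := by rw [htrace]; rfl
    _ ≤ ∑ i, ‖(L * C * Lᴴ) i i‖ := norm_sum_le _ _
    _ ≤ ∑ i, opNorm C * ‖w i‖ ^ 2 := by
        refine Finset.sum_le_sum fun i _ => ?_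
        rw [key i]
        exact hbound i
    _ = opNorm C * ∑ i, ‖w i‖ ^ 2 := by rw [Finset.mul_sum]
    _ = opNorm C := by rw [hsum, mul_one]

lemma stdBasis_conjT (a b : ι) :
    (Matrix.single a b (1 : ℂ))ᴴ = Matrix.single b a 1 := by
  refine Matrix.ext fun i j => ?_
  rw [Matrix.conjTranspose_apply]
  simp only [Matrix.single, Matrix.of_apply]
  by_cases h : b = i ∧ a = j
  · rw [if_pos h, if_pos ⟨h.2, h.1⟩, star_one]
  · rw [if_neg h, if_neg (fun hc => h ⟨hc.2, hc.1⟩), star_zero]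

end MatrixHelpers

section GlueHelpers
variable {Γ : Type} [Fintype Γ] [DecidableEq Γ]
variable {κ : Γ → Type} [∀ x, Fintype (κ x)] [∀ x, DecidableEq (κ x)]

/-- Restriction of a configuration. -/
def res (X : Finset Γ) (f : Cfg κ) : SubCfg κ X := fun x => f x.1

lemma glue_mem {X : Finset Γ} (a : SubCfg κ X) (c : SubCfg κ Xᶜ) {x : Γ} (h : x ∈ X) :
    glue κ X a c x = a ⟨x, h⟩ := dif_pos h

lemma glue_not_mem {X : Finset Γ} (a : SubCfg κ X) (c : SubCfg κ Xᶜ) {x : Γ} (h : x ∉ X) :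
    glue κ X a c x = c ⟨x, Finset.mem_compl.mpr h⟩ := dif_neg h

lemma res_glue_left (X : Finset Γ) (a : SubCfg κ X) (c : SubCfg κ Xᶜ) :
    res X (glue κ X a c) = a := funext fun x => glue_mem a c x.2

lemma res_glue_right (X : Finset Γ) (a : SubCfg κ X) (c : SubCfg κ Xᶜ) :
    res Xᶜ (glue κ X a c) = c := funext fun x => by
  have hx : x.1 ∉ X := Finset.mem_compl.mp x.2
  rw [res, glue_not_mem a c hx]

lemma glue_res (X : Finset Γ) (f : Cfg κ) : glue κ X (res X f) (res Xᶜ f) = f :=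
  funext fun x => by
    by_cases h : x ∈ X
    · rw [glue_mem _ _ h]; rfl
    · rw [glue_not_mem _ _ h]; rfl

/-- Splitting a configuration along a cut. -/
def cfgEquiv (X : Finset Γ) : (SubCfg κ X × SubCfg κ Xᶜ) ≃ Cfg κ where
  toFun p := glue κ X p.1 p.2
  invFun f := (res X f, res Xᶜ f)
  left_inv p := by
    cases p with
    | mk a c => simp [res_glue_left, res_glue_right]
  right_inv f := glue_res X f

lemma sum_cfg (X : Finset Γ) (F : Cfg κ → ℂ) :
    ∑ f : Cfg κ, F f = ∑ a : SubCfg κ X, ∑ c : SubCfg κ Xᶜ, F (glue κ X a c) := by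
  rw [← Equiv.sum_comp (cfgEquiv (κ := κ) X) F, Fintype.sum_prod_type]; rfl

lemma offdiag_cond_iff {X : Finset Γ} (a b : SubCfg κ X) (c d : SubCfg κ Xᶜ) :
    (∀ x, x ∉ X → glue κ X a c x = glue κ X b d x) ↔ c = d := by
  constructor
  · intro h
    funext x
    have hx : x.1 ∉ X := Finset.mem_compl.mp x.2
    have := h x.1 hx
    rwa [glue_not_mem _ _ hx, glue_not_mem _ _ hx] at this
  · rintro rfl x hx
    rw [glue_not_mem _ _ hx, glue_not_mem _ _ hx]

lemma cond_glue_left {X : Finset Γ} (f : Cfg κ) (u : SubCfg κ X) (d : SubCfg κ Xᶜ) :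
    (∀ x, x ∉ X → f x = glue κ X u d x) ↔ d = res Xᶜ f := by
  constructor
  · intro h
    funext x
    have hx : x.1 ∉ X := Finset.mem_compl.mp x.2
    have := h x.1 hx
    rw [glue_not_mem _ _ hx] at this
    exact this.symm
  · rintro rfl x hx
    rw [glue_not_mem _ _ hx]; rfl

lemma cond_glue_right {X : Finset Γ} (u : SubCfg κ X) (d : SubCfg κ Xᶜ) (g : Cfg κ) :
    (∀ x, x ∉ X → glue κ X u d x = g x) ↔ d = res Xᶜ g := by
  constructor
  · intro h
    funext x
    have hx : x.1 ∉ X := Finset.mem_compl.mp x.2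
    have := h x.1 hx
    rw [glue_not_mem _ _ hx] at this
    exact this
  · rintro rfl x hx
    rw [glue_not_mem _ _ hx]; rfl

lemma res_compl_eq_iff {X : Finset Γ} (f g : Cfg κ) :
    res Xᶜ f = res Xᶜ g ↔ ∀ x, x ∉ X → f x = g x := by
  constructor
  · intro h x hx
    exact congrFun h ⟨x, Finset.mem_compl.mpr hx⟩
  · intro h
    funext x
    exact h x.1 (Finset.mem_compl.mp x.2)

lemma embed_glue {X : Finset Γ} (O : Matrix (SubCfg κ X) (SubCfg κ X) ℂ)
    (a b : SubCfg κ X) (c d : SubCfg κ Xᶜ) :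
    embed κ X O (glue κ X a c) (glue κ X b d) = if c = d then O a b else 0 := by
  show (if ∀ x, x ∉ X → glue κ X a c x = glue κ X b d x then
      O (res X (glue κ X a c)) (res X (glue κ X b d)) else 0) = _
  rw [res_glue_left, res_glue_left]
  by_cases h : c = d
  · rw [if_pos ((offdiag_cond_iff a b c d).mpr h), if_pos h]
  · rw [if_neg (fun hc => h ((offdiag_cond_iff a b c d).mp hc)), if_neg h]

lemma condExp_glue {Y : Finset Γ} (A : Op κ) (a b : SubCfg κ Y) (c d : SubCfg κ Yᶜ) :
    condExp κ Y A (glue κ Y a c) (glue κ Y b d) =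
      if c = d then ptrace κ Y A a b / (Fintype.card (SubCfg κ Yᶜ) : ℂ) else 0 := by
  show (if ∀ x, x ∉ Y → glue κ Y a c x = glue κ Y b d x then
      ptrace κ Y A (res Y (glue κ Y a c)) (res Y (glue κ Y b d)) /
        (Fintype.card (SubCfg κ Yᶜ) : ℂ) else 0) = _
  rw [res_glue_left, res_glue_left]
  by_cases h : c = d
  · rw [if_pos ((offdiag_cond_iff a b c d).mpr h), if_pos h]
  · rw [if_neg (fun hc => h ((offdiag_cond_iff a b c d).mp hc)), if_neg h]

lemma trace_mul_expand (M N : Op κ) : (M * N).trace = ∑ f, ∑ g, M f g * N g f := by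
  simp [Matrix.trace, Matrix.diag, Matrix.mul_apply]

lemma trace_mul_embed (X : Finset Γ) (A : Op κ) (O : Matrix (SubCfg κ X) (SubCfg κ X) ℂ) :
    (A * embed κ X O).trace = (ptrace κ X A * O).trace := by
  have L : (A * embed κ X O).trace
      = ∑ a : SubCfg κ X, ∑ c : SubCfg κ Xᶜ, ∑ b : SubCfg κ X,
          A (glue κ X a c) (glue κ X b c) * O b a := by
    rw [trace_mul_expand, sum_cfg X]
    refine Finset.sum_congr rfl fun a _ => Finset.sum_congr rfl fun c _ => ?_
    rw [sum_cfg X (fun g => A (glue κ X a c) g * embed κ X O g (glue κ X a c))]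
    refine Finset.sum_congr rfl fun b _ => ?_
    calc ∑ d : SubCfg κ Xᶜ,
          A (glue κ X a c) (glue κ X b d) * embed κ X O (glue κ X b d) (glue κ X a c)
        = ∑ d : SubCfg κ Xᶜ,
            if d = c then A (glue κ X a c) (glue κ X b d) * O b a else 0 := by
          refine Finset.sum_congr rfl fun d _ => ?_
          rw [embed_glue]
          by_cases h : d = c
          · rw [if_pos h, if_pos h]
          · rw [if_neg h, if_neg h, mul_zero]
      _ = A (glue κ X a c) (glue κ X b c) * O b a := by
          rw [Finset.sum_ite_eq' Finset.univ c
            (fun d => A (glue κ X a c) (glue κ X b d) * O b a)]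
          simp
  rw [L]
  have R : (ptrace κ X A * O).trace
      = ∑ a : SubCfg κ X, ∑ b : SubCfg κ X, ∑ c : SubCfg κ Xᶜ,
          A (glue κ X a c) (glue κ X b c) * O b a := by
    rw [trace_mul_expand]
    refine Finset.sum_congr rfl fun a _ => Finset.sum_congr rfl fun b _ => ?_
    rw [ptrace, Finset.sum_mul]
  rw [R]
  exact Finset.sum_congr rfl fun a _ => Finset.sum_comm

lemma ptrace_herm {X : Finset Γ} {A : Op κ} (hA : A.IsHermitian) :
    (ptrace κ X A).IsHermitian := by
  refine Matrix.ext fun a b => ?_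
  rw [Matrix.conjTranspose_apply, ptrace, ptrace, star_sum]
  refine Finset.sum_congr rfl fun c _ => ?_
  rw [← Matrix.conjTranspose_apply, hA.eq]

lemma condExp_herm {Y : Finset Γ} {A : Op κ} (hA : A.IsHermitian) :
    (condExp κ Y A).IsHermitian := by
  refine Matrix.ext fun f g => ?_
  rw [Matrix.conjTranspose_apply, condExp, condExp]
  by_cases h : ∀ x, x ∉ Y → f x = g x
  · have h' : ∀ x, x ∉ Y → g x = f x := fun x hx => (h x hx).symm
    rw [if_pos h', if_pos h, star_div₀]
    congr 1
    · rw [← Matrix.conjTranspose_apply, (ptrace_herm hA).eq]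
    · exact star_natCast _
  · have h' : ¬ ∀ x, x ∉ Y → g x = f x := fun hc => h fun x hx => (hc x hx).symm
    rw [if_neg h', if_neg h, star_zero]

lemma embed_conjT {X : Finset Γ} (O : Matrix (SubCfg κ X) (SubCfg κ X) ℂ) :
    (embed κ X O)ᴴ = embed κ X Oᴴ := by
  refine Matrix.ext fun f g => ?_
  rw [Matrix.conjTranspose_apply, embed, embed]
  by_cases h : ∀ x, x ∉ X → f x = g x
  · have h' : ∀ x, x ∉ X → g x = f x := fun x hx => (h x hx).symm
    rw [if_pos h', if_pos h]
    rfl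
  · have h' : ¬ ∀ x, x ∉ X → g x = f x := fun hc => h fun x hx => (hc x hx).symm
    rw [if_neg h', if_neg h, star_zero]

lemma embed_one (X : Finset Γ) : embed κ X (1 : Matrix (SubCfg κ X) (SubCfg κ X) ℂ) = 1 := by
  refine Matrix.ext fun f g => ?_
  rw [embed]
  by_cases h : f = g
  · subst h
    rw [if_pos (fun _ _ => rfl), Matrix.one_apply_eq, Matrix.one_apply_eq]
  · rw [Matrix.one_apply_ne h]
    by_cases hc : ∀ x, x ∉ X → f x = g x
    · rw [if_pos hc]
      have hne : (fun x : X => f x.1) ≠ (fun x : X => g x.1) := by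
        intro heq
        apply h
        funext x
        by_cases hx : x ∈ X
        · exact congrFun heq ⟨x, hx⟩
        · exact hc x hx
      rw [Matrix.one_apply_ne hne]
    · rw [if_neg hc]

lemma embed_mul {X : Finset Γ} (P Q : Matrix (SubCfg κ X) (SubCfg κ X) ℂ) :
    embed κ X (P * Q) = embed κ X P * embed κ X Q := by
  refine Matrix.ext fun f g => ?_
  rw [Matrix.mul_apply]
  rw [sum_cfg X (fun h => embed κ X P f h * embed κ X Q h g)]
  have step1 : ∀ u : SubCfg κ X,
      ∑ d : SubCfg κ Xᶜ, embed κ X P f (glue κ X u d) * embed κ X Q (glue κ X u d) g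
        = P (res X f) u * embed κ X Q (glue κ X u (res Xᶜ f)) g := by
    intro u
    have e1 : ∀ d, embed κ X P f (glue κ X u d) =
        if d = res Xᶜ f then P (res X f) u else 0 := by
      intro d
      show (if ∀ x, x ∉ X → f x = glue κ X u d x then
        P (res X f) (res X (glue κ X u d)) else 0) = _
      rw [res_glue_left]
      by_cases h : d = res Xᶜ f
      · rw [if_pos ((cond_glue_left f u d).mpr h), if_pos h]
      · rw [if_neg (fun hc => h ((cond_glue_left f u d).mp hc)), if_neg h]
    calc ∑ d : SubCfg κ Xᶜ, embed κ X P f (glue κ X u d) * embed κ X Q (glue κ X u d) g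
        = ∑ d : SubCfg κ Xᶜ, if d = res Xᶜ f then
            P (res X f) u * embed κ X Q (glue κ X u d) g else 0 := by
          refine Finset.sum_congr rfl fun d _ => ?_
          rw [e1 d]
          by_cases h : d = res Xᶜ f
          · rw [if_pos h, if_pos h]
          · rw [if_neg h, if_neg h, zero_mul]
      _ = P (res X f) u * embed κ X Q (glue κ X u (res Xᶜ f)) g := by
          rw [Finset.sum_ite_eq' Finset.univ (res Xᶜ f)
            (fun d => P (res X f) u * embed κ X Q (glue κ X u d) g)]
          simp
  rw [Finset.sum_congr rfl fun u _ => step1 u]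
  have e2 : ∀ u, embed κ X Q (glue κ X u (res Xᶜ f)) g =
      if ∀ x, x ∉ X → f x = g x then Q u (res X g) else 0 := by
    intro u
    show (if ∀ x, x ∉ X → glue κ X u (res Xᶜ f) x = g x then
      Q (res X (glue κ X u (res Xᶜ f))) (res X g) else 0) = _
    rw [res_glue_left]
    have hiff : (∀ x, x ∉ X → glue κ X u (res Xᶜ f) x = g x) ↔ (∀ x, x ∉ X → f x = g x) := by
      rw [cond_glue_right]
      exact res_compl_eq_iff f g
    by_cases h : ∀ x, x ∉ X → f x = g x
    · rw [if_pos (hiff.mpr h), if_pos h]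
    · rw [if_neg (fun hc => h (hiff.mp hc)), if_neg h]
  rw [Finset.sum_congr rfl fun u _ => by rw [e2 u]]
  rw [embed]
  by_cases h : ∀ x, x ∉ X → f x = g x
  · rw [if_pos h]
    rw [Finset.sum_congr rfl fun u _ => by rw [if_pos h]]
    rw [Matrix.mul_apply]
    rfl
  · rw [if_neg h]
    rw [Finset.sum_congr rfl fun u _ => by rw [if_neg h, mul_zero]]
    exact Finset.sum_const_zero.symm

lemma trace_condExp_swap (Y : Finset Γ) (S M : Op κ) :
    (condExp κ Y S * M).trace = (S * condExp κ Y M).trace := by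
  set D : ℂ := (Fintype.card (SubCfg κ Yᶜ) : ℂ) with hD
  have L : (condExp κ Y S * M).trace
      = ∑ a : SubCfg κ Y, ∑ b : SubCfg κ Y, ∑ c : SubCfg κ Yᶜ, ∑ c' : SubCfg κ Yᶜ,
          S (glue κ Y a c') (glue κ Y b c') * M (glue κ Y b c) (glue κ Y a c) / D := by
    rw [trace_mul_expand, sum_cfg Y]
    have inner : ∀ (a : SubCfg κ Y) (c : SubCfg κ Yᶜ),
        ∑ g, condExp κ Y S (glue κ Y a c) g * M g (glue κ Y a c)
          = ∑ b : SubCfg κ Y, ∑ c' : SubCfg κ Yᶜ,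
              S (glue κ Y a c') (glue κ Y b c') * M (glue κ Y b c) (glue κ Y a c) / D := by
      intro a c
      rw [sum_cfg Y (fun g => condExp κ Y S (glue κ Y a c) g * M g (glue κ Y a c))]
      refine Finset.sum_congr rfl fun b _ => ?_
      calc ∑ d : SubCfg κ Yᶜ,
            condExp κ Y S (glue κ Y a c) (glue κ Y b d) * M (glue κ Y b d) (glue κ Y a c)
          = ∑ d : SubCfg κ Yᶜ, if c = d then
              (ptrace κ Y S a b / D) * M (glue κ Y b d) (glue κ Y a c) else 0 := by
            refine Finset.sum_congr rfl fun d _ => ?_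
            rw [condExp_glue]
            by_cases h : c = d
            · rw [if_pos h, if_pos h]
            · rw [if_neg h, if_neg h, zero_mul]
        _ = (ptrace κ Y S a b / D) * M (glue κ Y b c) (glue κ Y a c) := by
            rw [Finset.sum_ite_eq Finset.univ c
              (fun d => (ptrace κ Y S a b / D) * M (glue κ Y b d) (glue κ Y a c))]
            simp
        _ = ∑ c' : SubCfg κ Yᶜ,
              S (glue κ Y a c') (glue κ Y b c') * M (glue κ Y b c) (glue κ Y a c) / D := by
            rw [ptrace, div_mul_eq_mul_div, Finset.sum_mul, Finset.sum_div]
    calc ∑ a : SubCfg κ Y, ∑ c : SubCfg κ Yᶜ,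
          ∑ g, condExp κ Y S (glue κ Y a c) g * M g (glue κ Y a c)
        = ∑ a : SubCfg κ Y, ∑ c : SubCfg κ Yᶜ, ∑ b : SubCfg κ Y, ∑ c' : SubCfg κ Yᶜ,
            S (glue κ Y a c') (glue κ Y b c') * M (glue κ Y b c) (glue κ Y a c) / D := by
          exact Finset.sum_congr rfl fun a _ => Finset.sum_congr rfl fun c _ => inner a c
      _ = _ := Finset.sum_congr rfl fun a _ => Finset.sum_comm
  have R : (S * condExp κ Y M).trace
      = ∑ a : SubCfg κ Y, ∑ b : SubCfg κ Y, ∑ c : SubCfg κ Yᶜ, ∑ c' : SubCfg κ Yᶜ,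
          S (glue κ Y a c') (glue κ Y b c') * M (glue κ Y b c) (glue κ Y a c) / D := by
    rw [trace_mul_expand, sum_cfg Y]
    have inner : ∀ (a : SubCfg κ Y) (c : SubCfg κ Yᶜ),
        ∑ g, S (glue κ Y a c) g * condExp κ Y M g (glue κ Y a c)
          = ∑ b : SubCfg κ Y, ∑ c' : SubCfg κ Yᶜ,
              S (glue κ Y a c) (glue κ Y b c) * M (glue κ Y b c') (glue κ Y a c') / D := by
      intro a c
      rw [sum_cfg Y (fun g => S (glue κ Y a c) g * condExp κ Y M g (glue κ Y a c))]
      refine Finset.sum_congr rfl fun b _ => ?_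
      calc ∑ d : SubCfg κ Yᶜ,
            S (glue κ Y a c) (glue κ Y b d) * condExp κ Y M (glue κ Y b d) (glue κ Y a c)
          = ∑ d : SubCfg κ Yᶜ, if d = c then
              S (glue κ Y a c) (glue κ Y b d) * (ptrace κ Y M b a / D) else 0 := by
            refine Finset.sum_congr rfl fun d _ => ?_
            rw [condExp_glue]
            by_cases h : d = c
            · rw [if_pos h, if_pos h]
            · rw [if_neg h, if_neg h, mul_zero]
        _ = S (glue κ Y a c) (glue κ Y b c) * (ptrace κ Y M b a / D) := by
            rw [Finset.sum_ite_eq' Finset.univ c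
              (fun d => S (glue κ Y a c) (glue κ Y b d) * (ptrace κ Y M b a / D))]
            simp
        _ = ∑ c' : SubCfg κ Yᶜ,
              S (glue κ Y a c) (glue κ Y b c) * M (glue κ Y b c') (glue κ Y a c') / D := by
            rw [ptrace, ← mul_div_assoc, Finset.mul_sum, Finset.sum_div]
    calc ∑ a : SubCfg κ Y, ∑ c : SubCfg κ Yᶜ,
          ∑ g, S (glue κ Y a c) g * condExp κ Y M g (glue κ Y a c)
        = ∑ a : SubCfg κ Y, ∑ c : SubCfg κ Yᶜ, ∑ b : SubCfg κ Y, ∑ c' : SubCfg κ Yᶜ,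
            S (glue κ Y a c) (glue κ Y b c) * M (glue κ Y b c') (glue κ Y a c') / D :=
          Finset.sum_congr rfl fun a _ => Finset.sum_congr rfl fun c _ => inner a c
      _ = ∑ a : SubCfg κ Y, ∑ b : SubCfg κ Y, ∑ c : SubCfg κ Yᶜ, ∑ c' : SubCfg κ Yᶜ,
            S (glue κ Y a c) (glue κ Y b c) * M (glue κ Y b c') (glue κ Y a c') / D :=
          Finset.sum_congr rfl fun a _ => Finset.sum_comm
      _ = _ := by
          refine Finset.sum_congr rfl fun a _ => Finset.sum_congr rfl fun b _ => ?_
          exact Finset.sum_comm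
  rw [L, R]

end GlueHelpers

end Stability

namespace Stability

/-- **Duality of almost locality**.  Let `Υ : 𝒜 → 𝒜` be a unital positive linear map
preserving almost locality with `m ∈ 𝓜`, and let `Υ*` be its adjoint with respect to the
trace pairing (so `Υ*` is positive and trace-preserving).  Then for every density matrix
`ρ`, every `X ⊆ Γ` and every `r ∈ ℕ+`:
`|Υ*(ρ) − Υ*(tr_{((X)_r)^c}(ρ) ⊗ ι_{((X)_r)^c})|_X ≤ |X| m(r)`. -/
theorem adjoint_almost_locality
    (Γ : Type) [Fintype Γ] [DecidableEq Γ] (G : SimpleGraph Γ) (hG : G.Connected)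
    (κ : Γ → Type) [∀ x, Fintype (κ x)] [∀ x, DecidableEq (κ x)]
    (m : ℕ → ℝ) (hm : InM m)
    (T Ts : Op κ → Op κ)
    (hlin : IsLinearMap ℂ T) (hunital : T 1 = 1)
    (hpos : ∀ A : Op κ, A.PosSemidef → (T A).PosSemidef)
    (hloc : PreservesAlmostLocality κ G T m)
    (hadj : ∀ O S : Op κ, (S * T O).trace = (Ts S * O).trace) :
    ∀ ρ : Op κ, IsDensity κ ρ → ∀ (X : Finset Γ) (r : ℕ), 1 ≤ r →
      locNorm κ X (Ts ρ - Ts (condExp κ (fatten G X r) ρ)) ≤ (X.card : ℝ) * m r := by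
  classical
  -- `T` preserves Hermitian matrices
  have Tsub : ∀ A B : Op κ, T (A - B) = T A - T B := by
    intro A B
    rw [sub_eq_add_neg, hlin.map_add, show (-B : Op κ) = (-1 : ℂ) • B by simp,
      hlin.map_smul, neg_one_smul, ← sub_eq_add_neg]
  have hThermit : ∀ H : Op κ, H.IsHermitian → (T H).IsHermitian := by
    intro H hH
    obtain ⟨P, Q, hP, hQ, rfl⟩ := herm_diff_psd hH
    rw [Tsub]
    exact ((hpos P hP).1).sub ((hpos Q hQ).1)
  -- `T` is star-preserving
  have hTstar : ∀ N : Op κ, T Nᴴ = (T N)ᴴ := by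
    intro N
    set H : Op κ := ((1 : ℂ)/2) • (N + Nᴴ) with hHdef
    set K : Op κ := (Complex.I/2) • (Nᴴ - N) with hKdef
    have hH : H.IsHermitian := by
      rw [Matrix.IsHermitian, hHdef, Matrix.conjTranspose_smul, Matrix.conjTranspose_add,
        Matrix.conjTranspose_conjTranspose]
      rw [show star ((1 : ℂ)/2) = (1 : ℂ)/2 by norm_num]
      rw [add_comm]
    have hK : K.IsHermitian := by
      rw [Matrix.IsHermitian, hKdef, Matrix.conjTranspose_smul, Matrix.conjTranspose_sub,
        Matrix.conjTranspose_conjTranspose]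
      rw [show star (Complex.I/2) = -(Complex.I/2) by
        simp [Complex.ext_iff]; norm_num]
      rw [neg_smul, ← smul_neg, neg_sub]
    have hNdec : N = H + Complex.I • K := by
      rw [hHdef, hKdef, smul_smul]
      rw [show Complex.I * (Complex.I/2) = -(1/2 : ℂ) by
        rw [mul_div_assoc']; rw [Complex.I_mul_I]; ring]
      module
    have hNHdec : Nᴴ = H - Complex.I • K := by
      rw [hHdef, hKdef, smul_smul]
      rw [show Complex.I * (Complex.I/2) = -(1/2 : ℂ) by
        rw [mul_div_assoc']; rw [Complex.I_mul_I]; ring]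
      module
    have hTH := hThermit H hH
    have hTK := hThermit K hK
    calc T Nᴴ = T (H - Complex.I • K) := by rw [← hNHdec]
      _ = T H - Complex.I • T K := by rw [Tsub]; rw [hlin.map_smul Complex.I K]
      _ = (T H + Complex.I • T K)ᴴ := by
          rw [Matrix.conjTranspose_add, Matrix.conjTranspose_smul, hTH.eq, hTK.eq,
            Complex.star_def, Complex.conj_I, neg_smul, ← sub_eq_add_neg]
      _ = (T (H + Complex.I • K))ᴴ := by
          rw [hlin.map_add, hlin.map_smul Complex.I K]
      _ = (T N)ᴴ := by rw [← hNdec]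
  -- `Ts` preserves Hermitian matrices
  have hTsherm : ∀ S : Op κ, S.IsHermitian → (Ts S).IsHermitian := by
    intro S hS
    refine Matrix.ext fun f g => ?_
    rw [Matrix.conjTranspose_apply]
    rw [← trace_mul_std (Ts S) g f, ← hadj, ← Matrix.trace_conjTranspose,
      Matrix.conjTranspose_mul, Matrix.trace_mul_comm, hS.eq, ← hTstar, stdBasis_conjT,
      hadj, trace_mul_std]
  intro ρ hρ X r hr
  set Y : Finset Γ := fatten G X r with hY
  set σ : Op κ := condExp κ Y ρ with hσ
  have hρh : ρ.IsHermitian := hρ.1.1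
  have hσh : σ.IsHermitian := condExp_herm hρh
  have hAherm : (Ts ρ - Ts σ).IsHermitian := (hTsherm ρ hρh).sub (hTsherm σ hσh)
  have hBherm : (ptrace κ X (Ts ρ - Ts σ)).IsHermitian := ptrace_herm hAherm
  obtain ⟨O₀, hO₀, hdual⟩ := exists_dual_matrix _ hBherm
  set Mo : Op κ := embed κ X O₀ with hMo
  have hMnorm : opNorm Mo ≤ 1 := by
    refine opNorm_le_one_of_isometry Mo ?_
    rw [hMo, embed_conjT, ← embed_mul, hO₀, embed_one]
  have hsupp : SupportedIn κ X Mo := ⟨O₀, rfl⟩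
  have etr : ((ptrace κ X (Ts ρ - Ts σ)) * O₀).trace
      = (ρ * (T Mo - condExp κ Y (T Mo))).trace := by
    rw [← trace_mul_embed, ← hMo, Matrix.sub_mul, Matrix.trace_sub, ← hadj Mo ρ, ← hadj Mo σ,
      hσ, trace_condExp_swap, ← Matrix.trace_sub, ← Matrix.mul_sub]
  have hloc' : opNorm (T Mo - condExp κ Y (T Mo)) ≤ opNorm Mo * (X.card : ℝ) * m r := by
    have := hloc X r hr Mo hsupp
    rwa [← hY] at this
  have hre : ((ρ * (T Mo - condExp κ Y (T Mo))).trace).re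
      ≤ opNorm (T Mo - condExp κ Y (T Mo)) :=
    trace_mul_re_le _ _ hρ.1 hρ.2
  have hcard : (0 : ℝ) ≤ (X.card : ℝ) := Nat.cast_nonneg _
  have hmr : 0 ≤ m r := hm.1 r
  calc locNorm κ X (Ts ρ - Ts σ)
      = ((ptrace κ X (Ts ρ - Ts σ) * O₀).trace).re := by rw [locNorm, ← hdual]
    _ = ((ρ * (T Mo - condExp κ Y (T Mo))).trace).re := by rw [etr]
    _ ≤ opNorm (T Mo - condExp κ Y (T Mo)) := hre
    _ ≤ opNorm Mo * (X.card : ℝ) * m r := hloc'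
    _ ≤ 1 * (X.card : ℝ) * m r := by
        have h0 : 0 ≤ (X.card : ℝ) * m r := mul_nonneg hcard hmr
        calc opNorm Mo * (X.card : ℝ) * m r = opNorm Mo * ((X.card : ℝ) * m r) := by ring
          _ ≤ 1 * ((X.card : ℝ) * m r) := mul_le_mul_of_nonneg_right hMnorm h0
          _ = 1 * (X.card : ℝ) * m r := by ring
    _ = (X.card : ℝ) * m r := by ring

end Stability
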